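/- Under ν-strong convexity, δ-mean-square-Lipschitz gradients, learning rate μ < min{ν/((2α+7)δ²), 1/(mν)}, and snapshot period m > 16αδ²/ν², the α-SVRG iterates satisfy, at iterations i = k·m: E‖w° - w_i‖² ≤ ((1-μν)^m + 8μδ²α/ν)^k ‖w° - w_0‖² + 3μσ²(1-α)/(ν - 8μδ²α). -/

import Mathlib

/-! Write `e i` for the mean of `‖w° - w_i‖²` over the index sequence. Averaged over the
sampled index, the α-SVRG direction is `∇J(w_i)`, so strong monotonicity of `∇J` contracts
`‖w° - w_i‖²` by `1 - 2μν`; the second moment of the direction, split around `∇Q(w°; ·)`, is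
controlled by mean-square Lipschitzness and by "a variance is at most a second moment". This gives
`e (i+1) ≤ (1 - μν) e i + 3μ²α²δ² e(snapshot) + 3μ²(1-α)²σ²`. Because `w_i` and the snapshot do
not depend on the `i`-th index, the step from `i` to `i+1` only averages over that coordinate.
Unrolled over an epoch this is a geometric sum, and from epoch to epoch an affine recursion
`v ↦ r v + c` with `r ≤ (1 - μν)^m + 8μδ²α/ν` and `r C + c ≤ C` for `C = 3μσ²(1-α)/(ν - 8μδ²α)`. -/

open Finset
open scoped RealInnerProductSpace

section Gradient

variable {E : Type*} [NormedAddCommGroup E] [InnerProductSpace ℝ E] [CompleteSpace E]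

theorem ConvexOn.inner_gradient_sub_nonneg {g : E → ℝ} {g' : E → E}
    (hconv : ConvexOn ℝ Set.univ g) (hg : ∀ z, HasGradientAt g (g' z) z) (x y : E) :
    0 ≤ ⟪g' x - g' y, x - y⟫ := by
  set L : ℝ →ᵃ[ℝ] E := AffineMap.lineMap y x
  have hline : ConvexOn ℝ Set.univ (g ∘ L) := by simpa using hconv.comp_affineMap L
  have hderiv (t : ℝ) : HasDerivAt (g ∘ L) ⟪g' (L t), x - y⟫ t :=
    (hg _).hasFDerivAt.comp_hasDerivAt t AffineMap.hasDerivAt_lineMap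
  have h := (hline.le_slope_of_hasDerivAt (Set.mem_univ 0) (Set.mem_univ 1) one_pos
    (hderiv 0)).trans (hline.slope_le_of_hasDerivAt (Set.mem_univ 0) (Set.mem_univ 1) one_pos
    (hderiv 1))
  simp only [L, AffineMap.lineMap_apply_zero, AffineMap.lineMap_apply_one] at h
  rw [inner_sub_left]
  linarith

theorem StrongConvexOn.mul_norm_sub_sq_le_inner_gradient_sub {J : E → ℝ} {J' : E → E} {ν : ℝ}
    (hsc : StrongConvexOn Set.univ ν J) (hJ : ∀ z, HasGradientAt J (J' z) z) (x y : E) :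
    ν * ‖x - y‖ ^ 2 ≤ ⟪J' x - J' y, x - y⟫ := by
  have hg (z : E) : HasGradientAt (fun z ↦ J z - ν / 2 * ‖z‖ ^ 2) (J' z - ν • z) z := by
    rw [hasGradientAt_iff_hasFDerivAt]
    refine ((hJ z).hasFDerivAt.sub ((hasFDerivAt_id z).norm_sq.const_mul (ν / 2))).congr_fderiv ?_
    ext v
    simp only [id_eq, ContinuousLinearMap.comp_id, sub_apply,
      InnerProductSpace.toDual_apply_apply, smul_apply, coe_innerSL_apply,
      nsmul_eq_mul, Nat.cast_ofNat, smul_eq_mul, map_sub, map_smul, sub_right_inj]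
    ring
  have h := (strongConvexOn_iff_convex.mp hsc).inner_gradient_sub_nonneg hg x y
  rw [show J' x - ν • x - (J' y - ν • y) = J' x - J' y - ν • (x - y) by module, inner_sub_left,
    real_inner_smul_left, real_inner_self_eq_norm_sq] at h
  linarith

theorem IsLocalMin.hasGradientAt_eq_zero {J : E → ℝ} {J' x : E} (hmin : IsLocalMin J x)
    (hJ : HasGradientAt J J' x) : J' = 0 := by
  simpa using congrArg (InnerProductSpace.toDual ℝ E).symm
    (hmin.hasFDerivAt_eq_zero hJ.hasFDerivAt)

theorem hasGradientAt_const_mul_sum {ι : Type*} [Fintype ι] (c : ℝ) {Q : ι → E → ℝ}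
    {Q' : ι → E} {x : E} (hQ : ∀ n, HasGradientAt (Q n) (Q' n) x) :
    HasGradientAt (fun z ↦ c * ∑ n, Q n z) (c • ∑ n, Q' n) x := by
  rw [hasGradientAt_iff_hasFDerivAt, map_smul, map_sum]
  exact (HasFDerivAt.fun_sum fun n _ ↦ (hQ n).hasFDerivAt).const_mul c

end Gradient

theorem norm_add₃_sq_le {F : Type*} [SeminormedAddCommGroup F] (a b c : F) :
    ‖a + b + c‖ ^ 2 ≤ 3 * (‖a‖ ^ 2 + ‖b‖ ^ 2 + ‖c‖ ^ 2) := by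
  have := norm_add₃_le (a := a) (b := b) (c := c)
  nlinarith [norm_nonneg (a + b + c), sq_nonneg (‖a‖ - ‖b‖), sq_nonneg (‖b‖ - ‖c‖),
    sq_nonneg (‖a‖ - ‖c‖)]

theorem sum_norm_sub_sq_le_of_lipschitz {ι F : Type*} [Fintype ι] [SeminormedAddCommGroup F]
    {g : ι → F → F} {L : ι → ℝ} (hg : ∀ n x y, ‖g n x - g n y‖ ≤ L n * ‖x - y‖) (x y : F) :
    ∑ n, ‖g n x - g n y‖ ^ 2 ≤ (∑ n, L n ^ 2) * ‖x - y‖ ^ 2 := by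
  rw [sum_mul]
  gcongr with n
  rw [← mul_pow]
  exact pow_le_pow_left₀ (norm_nonneg _) (hg n x y) 2

theorem sum_norm_sub_sq_le_sum_norm_sq {ι E : Type*} [Fintype ι] [NormedAddCommGroup E]
    [InnerProductSpace ℝ E] (v : ι → E) {c : E}
    (hc : ∑ i, v i = (Fintype.card ι : ℝ) • c) :
    ∑ i, ‖c - v i‖ ^ 2 ≤ ∑ i, ‖v i‖ ^ 2 := by
  have h : ∑ i, ‖c - v i‖ ^ 2 = ∑ i, ‖v i‖ ^ 2 - Fintype.card ι * ‖c‖ ^ 2 := by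
    simp_rw [norm_sub_sq_real]
    rw [sum_add_distrib, sum_sub_distrib, ← mul_sum, ← inner_sum, hc, real_inner_smul_right,
      real_inner_self_eq_norm_sq, sum_const, card_univ, nsmul_eq_mul]
    ring
  rw [h]
  linarith [mul_nonneg (Nat.cast_nonneg (α := ℝ) (Fintype.card ι)) (sq_nonneg ‖c‖)]

theorem Fintype.card_smul_sum_apply_self {ι α M : Type*} [Fintype ι] [DecidableEq ι] [Fintype α]
    [AddCommMonoid M] (i : ι) (F : (ι → α) → α → M)
    (hF : ∀ ω a b, F (Function.update ω i b) a = F ω a) :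
    Fintype.card α • ∑ ω, F ω (ω i) = ∑ ω, ∑ a, F ω a := by
  let φ : (ι → α) × α → (ι → α) × α := fun p ↦ (Function.update p.1 i p.2, p.1 i)
  have hφ : Function.Involutive φ := fun p ↦ by simp [φ]
  calc Fintype.card α • ∑ ω, F ω (ω i) = ∑ p : (ι → α) × α, F (φ p).1 (φ p).2 := by
        simp [φ, hF, Fintype.sum_prod_type, smul_sum]
    _ = ∑ ω, ∑ a, F ω a :=
      (Equiv.sum_comp hφ.toPerm fun p ↦ F p.1 p.2).trans (Fintype.sum_prod_type _)

theorem le_pow_mul_add_mul_geom_sum_of_le_mul_add {u : ℕ → ℝ} {a d : ℝ} (ha : 0 ≤ a) {n : ℕ}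
    (h : ∀ j < n, u (j + 1) ≤ a * u j + d) :
    u n ≤ a ^ n * u 0 + d * ∑ l ∈ range n, a ^ l := by
  induction n with
  | zero => simp
  | succ n ih =>
    calc u (n + 1) ≤ a * u n + d := h n (by omega)
      _ ≤ a * (a ^ n * u 0 + d * ∑ l ∈ range n, a ^ l) + d := by
        gcongr; exact ih fun j hj ↦ h j (by omega)
      _ = a ^ (n + 1) * u 0 + d * ∑ l ∈ range (n + 1), a ^ l := by rw [geom_sum_succ]; ring

theorem le_pow_mul_add_of_le_mul_add {v : ℕ → ℝ} {r ρ c C : ℝ} (hr : 0 ≤ r) (hrρ : r ≤ ρ)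
    (hv0 : 0 ≤ v 0) (hC0 : 0 ≤ C) (hC : r * C + c ≤ C) {n : ℕ}
    (h : ∀ j < n, v (j + 1) ≤ r * v j + c) :
    v n ≤ ρ ^ n * v 0 + C := by
  induction n with
  | zero => simpa using hC0
  | succ n ih =>
    have hρn : 0 ≤ ρ ^ n * v 0 := mul_nonneg (pow_nonneg (hr.trans hrρ) n) hv0
    calc v (n + 1) ≤ r * v n + c := h n (by omega)
      _ ≤ r * (ρ ^ n * v 0 + C) + c := by gcongr; exact ih fun j hj ↦ h j (by omega)
      _ ≤ ρ * (ρ ^ n * v 0) + C := by nlinarith [mul_le_mul_of_nonneg_right hrρ hρn]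
      _ = ρ ^ (n + 1) * v 0 + C := by ring

theorem le_of_epoch_recursion {e : ℕ → ℝ} {m k : ℕ} (hm : 0 < m) {a b c ρ C : ℝ} (ha : 0 ≤ a)
    (hb : 0 ≤ b) (he0 : 0 ≤ e 0) (hC0 : 0 ≤ C)
    (hρ : a ^ m + b * ∑ l ∈ range m, a ^ l ≤ ρ)
    (hC : (a ^ m + b * ∑ l ∈ range m, a ^ l) * C + c * ∑ l ∈ range m, a ^ l ≤ C)
    (h : ∀ i < k * m, e (i + 1) ≤ a * e i + b * e (m * (i / m)) + c) :
    e (k * m) ≤ ρ ^ k * e 0 + C := by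
  set S := ∑ l ∈ range m, a ^ l
  have hS : 0 ≤ S := sum_nonneg fun l _ ↦ pow_nonneg ha l
  have hepoch (j : ℕ) (hj : j < k) : e ((j + 1) * m) ≤ (a ^ m + b * S) * e (j * m) + c * S := by
    have hinner : ∀ l < m, e (j * m + l + 1) ≤ a * e (j * m + l) + (b * e (j * m) + c) := by
      intro l hl
      have hdiv : (j * m + l) / m = j := by
        rw [add_comm, Nat.add_mul_div_right _ _ hm, Nat.div_eq_of_lt hl, zero_add]
      have := h (j * m + l) (by nlinarith)
      rw [hdiv, Nat.mul_comm m j] at this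
      linarith
    have := le_pow_mul_add_mul_geom_sum_of_le_mul_add (u := fun l ↦ e (j * m + l)) ha hinner
    calc e ((j + 1) * m) = e (j * m + m) := by rw [Nat.succ_mul]
      _ ≤ a ^ m * e (j * m + 0) + (b * e (j * m) + c) * S := this
      _ = (a ^ m + b * S) * e (j * m) + c * S := by rw [add_zero]; ring
  simpa using le_pow_mul_add_of_le_mul_add (v := fun j ↦ e (j * m)) (by positivity) hρ
    (by simpa using he0) hC0 hC hepoch

section StepSize

variable {m : ℕ} {ν δ σ μ α : ℝ}

theorem svrg_stepSize_bounds (hν : 0 < ν) (hα0 : 0 ≤ α) (hα1 : α ≤ 1) (hμ0 : 0 < μ)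
    (hμ : μ < min (ν / ((2 * α + 7) * δ ^ 2)) (1 / (m * ν))) :
    0 < m ∧ μ * ν ≤ 1 ∧ 3 * μ * δ ^ 2 ≤ ν ∧ 8 * μ * δ ^ 2 * α < ν := by
  have hμδ : μ * ((2 * α + 7) * δ ^ 2) < ν := by
    rcases (by positivity : 0 ≤ (2 * α + 7) * δ ^ 2).eq_or_lt with h0 | hpos
    · rwa [← h0, mul_zero]
    · exact (lt_div_iff₀ hpos).mp (hμ.trans_le (min_le_left _ _))
  have hmν : 0 < m * ν := one_div_pos.mp (hμ0.trans (hμ.trans_le (min_le_right _ _)))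
  have hm : 0 < m := by exact_mod_cast pos_of_mul_pos_left hmν hν.le
  have hμmν : μ * (m * ν) < 1 :=
    (lt_div_iff₀ hmν).mp (by simpa using hμ.trans_le (min_le_right _ _))
  refine ⟨hm, ?_, by nlinarith, by nlinarith⟩
  have : (1 : ℝ) ≤ m := by exact_mod_cast hm
  nlinarith [mul_pos hμ0 hν]

theorem one_sub_pow_eq_mul_geom_sum (μν : ℝ) (m : ℕ) :
    1 - (1 - μν) ^ m = μν * ∑ l ∈ range m, (1 - μν) ^ l := by
  have := geom_sum_mul (1 - μν) m
  linear_combination this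

theorem svrg_epoch_rate_le (hν : 0 < ν) (hμ0 : 0 < μ) (hα0 : 0 ≤ α) (hα1 : α ≤ 1)
    (hμν : μ * ν ≤ 1) :
    (1 - μ * ν) ^ m + 3 * μ ^ 2 * α ^ 2 * δ ^ 2 * ∑ l ∈ range m, (1 - μ * ν) ^ l ≤
      (1 - μ * ν) ^ m + 8 * μ * δ ^ 2 * α / ν := by
  have hgeom := one_sub_pow_eq_mul_geom_sum (μ * ν) m
  have hpow : 0 ≤ (1 - μ * ν) ^ m := pow_nonneg (by linarith) m
  have hpow1 : (1 - μ * ν) ^ m ≤ 1 := pow_le_one₀ (by linarith) (by nlinarith)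
  rw [add_le_add_iff_left, le_div_iff₀ hν]
  have hα : 3 * α ^ 2 ≤ 8 * α := by nlinarith
  calc 3 * μ ^ 2 * α ^ 2 * δ ^ 2 * (∑ l ∈ range m, (1 - μ * ν) ^ l) * ν
      = 3 * α ^ 2 * (μ * δ ^ 2) * (1 - (1 - μ * ν) ^ m) := by rw [hgeom]; ring
    _ ≤ 8 * α * (μ * δ ^ 2) * 1 := by gcongr; linarith
    _ = 8 * μ * δ ^ 2 * α := by ring

theorem svrg_epoch_fixedPoint (hν : 0 < ν) (hμ0 : 0 < μ) (hα0 : 0 ≤ α) (hα1 : α ≤ 1)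
    (hμν : μ * ν ≤ 1) (h3 : 3 * μ * δ ^ 2 ≤ ν) (h8 : 8 * μ * δ ^ 2 * α < ν) :
    ((1 - μ * ν) ^ m + 3 * μ ^ 2 * α ^ 2 * δ ^ 2 * ∑ l ∈ range m, (1 - μ * ν) ^ l)
        * (3 * μ * σ ^ 2 * (1 - α) / (ν - 8 * μ * δ ^ 2 * α))
      + 3 * μ ^ 2 * (1 - α) ^ 2 * σ ^ 2 * ∑ l ∈ range m, (1 - μ * ν) ^ l ≤
      3 * μ * σ ^ 2 * (1 - α) / (ν - 8 * μ * δ ^ 2 * α) := by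
  set S := ∑ l ∈ range m, (1 - μ * ν) ^ l
  set C := 3 * μ * σ ^ 2 * (1 - α) / (ν - 8 * μ * δ ^ 2 * α)
  have hS : 0 ≤ S := sum_nonneg fun l _ ↦ pow_nonneg (by linarith) l
  have hD : 0 < ν - 8 * μ * δ ^ 2 * α := by linarith
  -- `C` absorbs one inner step: the contraction removes `μ ν C`, the other terms add back less
  have hnoise : 3 * μ ^ 2 * α ^ 2 * δ ^ 2 * C + 3 * μ ^ 2 * (1 - α) ^ 2 * σ ^ 2 ≤ μ * ν * C := by
    have hkey : 3 * μ * α ^ 2 * δ ^ 2 + (1 - α) * (ν - 8 * μ * δ ^ 2 * α) ≤ ν := by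
      nlinarith [mul_nonneg hα0 (sub_nonneg.mpr hα1),
        mul_nonneg (mul_nonneg hα0 (sub_nonneg.mpr hα1)) (by positivity : 0 ≤ μ * δ ^ 2)]
    have hC : 0 ≤ C := div_nonneg (by have := sub_nonneg.mpr hα1; positivity) hD.le
    have hCD : C * (ν - 8 * μ * δ ^ 2 * α) = 3 * μ * σ ^ 2 * (1 - α) := div_mul_cancel₀ _ hD.ne'
    have hCD' := congrArg (μ * (1 - α) * ·) hCD
    nlinarith [mul_le_mul_of_nonneg_left hkey (by positivity : 0 ≤ μ * C)]
  rw [show (1 - μ * ν) ^ m = 1 - μ * ν * S by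
    linarith [one_sub_pow_eq_mul_geom_sum (μ * ν) m]]
  nlinarith [mul_le_mul_of_nonneg_left hnoise hS]

def svrgDirection {ι E : Type*} [AddCommGroup E] [Module ℝ E] (gradQ : ι → E → E)
    (gradJ : E → E) (α : ℝ) (n : ι) (x y : E) : E :=
  gradQ n x - α • gradQ n y + α • gradJ y

section OneStep

variable {E ι : Type*} [NormedAddCommGroup E] [InnerProductSpace ℝ E] [Fintype ι] [Nonempty ι]
  {gradQ : ι → E → E} {gradJ : E → E} {α : ℝ}

theorem sum_eq_card_smul_of_eq_inv_smul_sum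
    (hgradJ : ∀ x, gradJ x = (Fintype.card ι : ℝ)⁻¹ • ∑ n, gradQ n x) (x : E) :
    ∑ n, gradQ n x = (Fintype.card ι : ℝ) • gradJ x := by
  rw [hgradJ, smul_smul, mul_inv_cancel₀ (by positivity), one_smul]

theorem sum_svrgDirection (hgradJ : ∀ x, gradJ x = (Fintype.card ι : ℝ)⁻¹ • ∑ n, gradQ n x)
    (x y : E) : ∑ n, svrgDirection gradQ gradJ α n x y = (Fintype.card ι : ℝ) • gradJ x := by
  simp only [svrgDirection, sum_add_distrib, sum_sub_distrib, ← smul_sum, sum_const, card_univ,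
    sum_eq_card_smul_of_eq_inv_smul_sum hgradJ, ← Nat.cast_smul_eq_nsmul ℝ]
  module

theorem sum_norm_svrgDirection_sq_le {δn : ι → ℝ} {wo : E}
    (hgradJ : ∀ x, gradJ x = (Fintype.card ι : ℝ)⁻¹ • ∑ n, gradQ n x)
    (hLip : ∀ n x y, ‖gradQ n x - gradQ n y‖ ≤ δn n * ‖x - y‖) (hwo : gradJ wo = 0)
    (hα0 : 0 ≤ α) (hα1 : α ≤ 1) (x y : E) :
    ∑ n, ‖svrgDirection gradQ gradJ α n x y‖ ^ 2 ≤
      3 * ((∑ n, δn n ^ 2) * ‖x - wo‖ ^ 2) + 3 * α ^ 2 * ((∑ n, δn n ^ 2) * ‖y - wo‖ ^ 2)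
        + 3 * (1 - α) ^ 2 * ∑ n, ‖gradQ n wo‖ ^ 2 := by
  -- the middle summand has mean zero over `n`, so its mean square is at most that of
  -- `gradQ n y - gradQ n wo`
  have hsplit (n : ι) : svrgDirection gradQ gradJ α n x y = (gradQ n x - gradQ n wo)
      + α • (gradJ y - (gradQ n y - gradQ n wo)) + (1 - α) • gradQ n wo := by
    simp only [svrgDirection]
    module
  have hpoint (n : ι) : ‖svrgDirection gradQ gradJ α n x y‖ ^ 2 ≤
      3 * ‖gradQ n x - gradQ n wo‖ ^ 2 + 3 * α ^ 2 * ‖gradJ y - (gradQ n y - gradQ n wo)‖ ^ 2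
        + 3 * (1 - α) ^ 2 * ‖gradQ n wo‖ ^ 2 := by
    have h := norm_add₃_sq_le (gradQ n x - gradQ n wo)
      (α • (gradJ y - (gradQ n y - gradQ n wo))) ((1 - α) • gradQ n wo)
    rw [← hsplit, norm_smul, norm_smul, Real.norm_of_nonneg hα0,
      Real.norm_of_nonneg (sub_nonneg.mpr hα1)] at h
    linarith
  have hvar : ∑ n, ‖gradJ y - (gradQ n y - gradQ n wo)‖ ^ 2 ≤ ∑ n, ‖gradQ n y - gradQ n wo‖ ^ 2 :=
    sum_norm_sub_sq_le_sum_norm_sq _ (by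
      rw [sum_sub_distrib, sum_eq_card_smul_of_eq_inv_smul_sum hgradJ,
        sum_eq_card_smul_of_eq_inv_smul_sum hgradJ, hwo, smul_zero, sub_zero])
  have hx := sum_norm_sub_sq_le_of_lipschitz hLip x wo
  have hy := sum_norm_sub_sq_le_of_lipschitz hLip y wo
  calc ∑ n, ‖svrgDirection gradQ gradJ α n x y‖ ^ 2
      ≤ ∑ n, (3 * ‖gradQ n x - gradQ n wo‖ ^ 2
          + 3 * α ^ 2 * ‖gradJ y - (gradQ n y - gradQ n wo)‖ ^ 2
          + 3 * (1 - α) ^ 2 * ‖gradQ n wo‖ ^ 2) := sum_le_sum fun n _ ↦ hpoint n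
    _ = 3 * ∑ n, ‖gradQ n x - gradQ n wo‖ ^ 2
          + 3 * α ^ 2 * ∑ n, ‖gradJ y - (gradQ n y - gradQ n wo)‖ ^ 2
          + 3 * (1 - α) ^ 2 * ∑ n, ‖gradQ n wo‖ ^ 2 := by
      simp only [sum_add_distrib, mul_sum]
    _ ≤ _ := by gcongr; exact hvar.trans hy

theorem svrg_step_mean_sq_le {δn : ι → ℝ} {δ σ ν μ : ℝ} {wo : E}
    (hgradJ : ∀ x, gradJ x = (Fintype.card ι : ℝ)⁻¹ • ∑ n, gradQ n x)
    (hLip : ∀ n x y, ‖gradQ n x - gradQ n y‖ ≤ δn n * ‖x - y‖)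
    (hδ : δ ^ 2 = (Fintype.card ι : ℝ)⁻¹ * ∑ n, δn n ^ 2)
    (hσ : σ ^ 2 = (Fintype.card ι : ℝ)⁻¹ * ∑ n, ‖gradQ n wo‖ ^ 2)
    (hmono : ∀ x y, ν * ‖x - y‖ ^ 2 ≤ ⟪gradJ x - gradJ y, x - y⟫) (hwo : gradJ wo = 0)
    (hα0 : 0 ≤ α) (hα1 : α ≤ 1) (hμ : 0 ≤ μ) (h3 : 3 * μ * δ ^ 2 ≤ ν) (x y : E) :
    (Fintype.card ι : ℝ)⁻¹ * ∑ n, ‖wo - (x - μ • svrgDirection gradQ gradJ α n x y)‖ ^ 2 ≤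
      (1 - μ * ν) * ‖wo - x‖ ^ 2 + 3 * μ ^ 2 * α ^ 2 * δ ^ 2 * ‖wo - y‖ ^ 2
        + 3 * μ ^ 2 * (1 - α) ^ 2 * σ ^ 2 := by
  set d := svrgDirection gradQ gradJ α
  have hN : (Fintype.card ι : ℝ) ≠ 0 := by positivity
  have hexpand : (Fintype.card ι : ℝ)⁻¹ * ∑ n, ‖wo - (x - μ • d n x y)‖ ^ 2 =
      ‖wo - x‖ ^ 2 + 2 * μ * ⟪wo - x, gradJ x⟫
        + μ ^ 2 * ((Fintype.card ι : ℝ)⁻¹ * ∑ n, ‖d n x y‖ ^ 2) := by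
    have h (n : ι) : ‖wo - (x - μ • d n x y)‖ ^ 2 =
        ‖wo - x‖ ^ 2 + 2 * μ * ⟪wo - x, d n x y⟫ + μ ^ 2 * ‖d n x y‖ ^ 2 := by
      rw [show wo - (x - μ • d n x y) = (wo - x) + μ • d n x y by abel, norm_add_sq_real,
        real_inner_smul_right, norm_smul, mul_pow, Real.norm_eq_abs, sq_abs]
      ring
    simp only [h, sum_add_distrib, ← mul_sum, ← inner_sum, sum_const, card_univ, nsmul_eq_mul]
    rw [sum_svrgDirection hgradJ, real_inner_smul_right]
    field_simp
  have hdescent : ⟪wo - x, gradJ x⟫ ≤ -(ν * ‖wo - x‖ ^ 2) := by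
    have h := hmono x wo
    rw [hwo, sub_zero, ← neg_sub wo x, inner_neg_right, real_inner_comm, norm_neg] at h
    linarith
  have hmoment : (Fintype.card ι : ℝ)⁻¹ * ∑ n, ‖d n x y‖ ^ 2 ≤ 3 * δ ^ 2 * ‖wo - x‖ ^ 2
      + 3 * α ^ 2 * δ ^ 2 * ‖wo - y‖ ^ 2 + 3 * (1 - α) ^ 2 * σ ^ 2 := by
    have h := mul_le_mul_of_nonneg_left
      (sum_norm_svrgDirection_sq_le hgradJ hLip hwo hα0 hα1 x y)
      (by positivity : (0 : ℝ) ≤ (Fintype.card ι : ℝ)⁻¹)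
    rw [hδ, hσ, norm_sub_rev wo x, norm_sub_rev wo y]
    linarith
  have hδν := mul_le_mul_of_nonneg_right (mul_le_mul_of_nonneg_left h3 hμ) (sq_nonneg ‖wo - x‖)
  rw [hexpand]
  nlinarith [mul_le_mul_of_nonneg_left hdescent (by positivity : 0 ≤ 2 * μ),
    mul_le_mul_of_nonneg_left hmoment (sq_nonneg μ)]

end OneStep

def padSeq {α : Type*} {T : ℕ} (d : α) (ω : Fin T → α) : ℕ → α :=
  fun j ↦ if h : j < T then ω ⟨j, h⟩ else d

theorem padSeq_of_lt {α : Type*} {T : ℕ} (d : α) (ω : Fin T → α) {j : ℕ} (hj : j < T) :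
    padSeq d ω j = ω ⟨j, hj⟩ :=
  dif_pos hj

theorem padSeq_update_of_ne {α : Type*} {T : ℕ} (d : α) (ω : Fin T → α) {i : Fin T} {j : ℕ}
    (hj : j ≠ i) (a : α) : padSeq d (Function.update ω i a) j = padSeq d ω j := by
  unfold padSeq
  split_ifs with h
  · exact Function.update_of_ne (fun hji : (⟨j, h⟩ : Fin T) = i ↦ hj (congrArg Fin.val hji)) a ω
  · rfl

section Iterates

variable {E ι : Type*} [NormedAddCommGroup E] {w : ℕ → (ℕ → ι) → E} {w0 : E}

noncomputable def meanSqDist [Fintype ι] (d : ι) (T : ℕ) (w : ℕ → (ℕ → ι) → E) (wo : E)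
    (i : ℕ) : ℝ :=
  ((Fintype.card ι : ℝ) ^ T)⁻¹ * ∑ ω : Fin T → ι, ‖wo - w i (padSeq d ω)‖ ^ 2

theorem meanSqDist_zero [Fintype ι] (d : ι) (T : ℕ) (wo : E) (hw0 : ∀ ω, w 0 ω = w0) :
    meanSqDist d T w wo 0 = ‖wo - w0‖ ^ 2 := by
  have : Nonempty ι := ⟨d⟩
  simp [meanSqDist, hw0]

variable [NormedSpace ℝ E] {gradQ : ι → E → E} {gradJ : E → E} {μ α : ℝ} {m : ℕ}

theorem svrg_iterate_congr (hw0 : ∀ ω, w 0 ω = w0)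
    (hupd : ∀ i ω, w (i + 1) ω =
      w i ω - μ • svrgDirection gradQ gradJ α (ω i) (w i ω) (w (m * (i / m)) ω))
    {i : ℕ} {ω ω' : ℕ → ι} (h : ∀ j < i, ω j = ω' j) : w i ω = w i ω' := by
  induction i using Nat.strong_induction_on with
  | _ i ih =>
    cases i with
    | zero => rw [hw0, hw0]
    | succ i =>
      have hsnap : m * (i / m) ≤ i := Nat.mul_div_le i m
      rw [hupd, hupd, ih i (by lia) fun j hj ↦ h j (by lia),
        ih _ (by lia) fun j hj ↦ h j (by lia), h i (by lia)]

theorem meanSqDist_succ_le [Fintype ι] [DecidableEq ι] (d : ι) {T : ℕ} {wo : E} {a b c : ℝ}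
    (hw0 : ∀ ω, w 0 ω = w0)
    (hupd : ∀ i ω, w (i + 1) ω =
      w i ω - μ • svrgDirection gradQ gradJ α (ω i) (w i ω) (w (m * (i / m)) ω))
    (hstep : ∀ x y, (Fintype.card ι : ℝ)⁻¹ *
      ∑ n, ‖wo - (x - μ • svrgDirection gradQ gradJ α n x y)‖ ^ 2 ≤
        a * ‖wo - x‖ ^ 2 + b * ‖wo - y‖ ^ 2 + c)
    {i : ℕ} (hi : i < T) :
    meanSqDist d T w wo (i + 1) ≤
      a * meanSqDist d T w wo i + b * meanSqDist d T w wo (m * (i / m)) + c := by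
  have : Nonempty ι := ⟨d⟩
  let i' : Fin T := ⟨i, hi⟩
  let x : (Fin T → ι) → E := fun ω ↦ w i (padSeq d ω)
  let y : (Fin T → ι) → E := fun ω ↦ w (m * (i / m)) (padSeq d ω)
  have hfrozen {i₀ : ℕ} (hi₀ : i₀ ≤ i) (ω : Fin T → ι) (n : ι) :
      w i₀ (padSeq d (Function.update ω i' n)) = w i₀ (padSeq d ω) :=
    svrg_iterate_congr hw0 hupd fun j hj ↦ padSeq_update_of_ne d ω (by simp only [i']; lia) n
  have hsucc (ω : Fin T → ι) :
      w (i + 1) (padSeq d ω) = x ω - μ • svrgDirection gradQ gradJ α (ω i') (x ω) (y ω) := by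
    rw [hupd, padSeq_of_lt d ω hi]
  have hsum : ∑ ω : Fin T → ι, ‖wo - w (i + 1) (padSeq d ω)‖ ^ 2 ≤
      ∑ ω, (a * ‖wo - x ω‖ ^ 2 + b * ‖wo - y ω‖ ^ 2 + c) := by
    have hsample := Fintype.card_smul_sum_apply_self i'
      (fun ω n ↦ ‖wo - (x ω - μ • svrgDirection gradQ gradJ α n (x ω) (y ω))‖ ^ 2)
      (fun ω n n' ↦ by simp only [x, y, hfrozen le_rfl, hfrozen (Nat.mul_div_le i m)])
    simp only [← hsucc, nsmul_eq_mul] at hsample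
    have hN : (0 : ℝ) < Fintype.card ι := by positivity
    refine le_of_mul_le_mul_left ?_ hN
    rw [hsample, mul_sum]
    exact sum_le_sum fun ω _ ↦ (inv_mul_le_iff₀ hN).mp (hstep (x ω) (y ω))
  have hcard : ((Fintype.card ι : ℝ) ^ T)⁻¹ * ∑ _ω : Fin T → ι, c = c := by simp
  unfold meanSqDist
  calc _ ≤ ((Fintype.card ι : ℝ) ^ T)⁻¹ *
        ∑ ω, (a * ‖wo - x ω‖ ^ 2 + b * ‖wo - y ω‖ ^ 2 + c) := by gcongr
    _ = _ := by
      rw [sum_add_distrib, sum_add_distrib, ← mul_sum, ← mul_sum, mul_add, mul_add, hcard]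
      ring

end Iterates

theorem alpha_svrg_convergence_general
    {E : Type*} [NormedAddCommGroup E] [InnerProductSpace ℝ E] [CompleteSpace E]
    {N m : ℕ} (hN : 0 < N)
    (Q : Fin N → E → ℝ) (gradQ : Fin N → E → E) (J : E → ℝ) (gradJ : E → E)
    (δn : Fin N → ℝ) (δ ν σ μ α : ℝ) (wo w0 : E)
    (w : ℕ → (ℕ → Fin N) → E)
    (hQ : ∀ n x, HasGradientAt (Q n) (gradQ n x) x)
    (hJ : ∀ x, J x = (N : ℝ)⁻¹ * ∑ n, Q n x)
    (hgradJ : ∀ x, gradJ x = (N : ℝ)⁻¹ • ∑ n, gradQ n x)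
    (hLipn : ∀ n x y, ‖gradQ n x - gradQ n y‖ ≤ δn n * ‖x - y‖)
    (hδ : δ ^ 2 = (N : ℝ)⁻¹ * ∑ n, δn n ^ 2)
    (hσ : σ ^ 2 = (N : ℝ)⁻¹ * ∑ n, ‖gradQ n wo‖ ^ 2)
    (hsc : StrongConvexOn Set.univ ν J)
    (hmin : IsMinOn J Set.univ wo)
    (hν : 0 < ν) (hα0 : 0 ≤ α) (hα1 : α ≤ 1) (hμ0 : 0 < μ)
    (hμ : μ < min (ν / ((2 * α + 7) * δ ^ 2)) (1 / (m * ν)))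
    (hw0 : ∀ ω, w 0 ω = w0)
    (hupd : ∀ i ω, w (i + 1) ω =
      w i ω - μ • (gradQ (ω i) (w i ω) - α • gradQ (ω i) (w (m * (i / m)) ω)
        + α • gradJ (w (m * (i / m)) ω)))
    (k : ℕ) :
    ((N : ℝ) ^ (k * m))⁻¹ *
        ∑ ωf : Fin (k * m) → Fin N,
          ‖wo - w (k * m) (fun j => if h : j < k * m then ωf ⟨j, h⟩ else ⟨0, hN⟩)‖ ^ 2 ≤
      ((1 - μ * ν) ^ m + 8 * μ * δ ^ 2 * α / ν) ^ k * ‖wo - w0‖ ^ 2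
        + 3 * μ * σ ^ 2 * (1 - α) / (ν - 8 * μ * δ ^ 2 * α) := by
  obtain ⟨hm, hμν, h3, h8⟩ := svrg_stepSize_bounds hν hα0 hα1 hμ0 hμ
  have : Nonempty (Fin N) := ⟨⟨0, hN⟩⟩
  have hgrad (x : E) : HasGradientAt J (gradJ x) x := by
    rw [funext hJ, hgradJ x]
    exact hasGradientAt_const_mul_sum _ fun n ↦ hQ n x
  have hwo : gradJ wo = 0 := (hmin.isLocalMin Filter.univ_mem).hasGradientAt_eq_zero (hgrad wo)
  have hstep := svrg_step_mean_sq_le (by simpa using hgradJ) hLipn (by simpa using hδ)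
    (by simpa using hσ) (hsc.mul_norm_sub_sq_le_inner_gradient_sub hgrad) hwo hα0 hα1 hμ0.le h3
  have hC0 : 0 ≤ 3 * μ * σ ^ 2 * (1 - α) / (ν - 8 * μ * δ ^ 2 * α) :=
    div_nonneg (mul_nonneg (by positivity) (sub_nonneg.mpr hα1)) (by linarith)
  have h := le_of_epoch_recursion (e := meanSqDist ⟨0, hN⟩ (k * m) w wo) hm (by linarith)
    (by positivity) (by rw [meanSqDist_zero _ _ _ hw0]; positivity) hC0
    (svrg_epoch_rate_le hν hμ0 hα0 hα1 hμν) (svrg_epoch_fixedPoint hν hμ0 hα0 hα1 hμν h3 h8)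
    fun i hi ↦ meanSqDist_succ_le _ hw0 hupd hstep hi
  rwa [meanSqDist_zero _ _ _ hw0, meanSqDist, Fintype.card_fin] at h

/-- Convergence of α-SVRG under strong convexity: with ν-strongly convex
`J = (1/N)Σ Q(·;xₙ)` (minimizer `w°`), `δₙ`-Lipschitz component gradients with
`δ² = (1/N)Σ δₙ²`, `σ² = (1/N)Σ ‖∇Q(w°;xₙ)‖²`, learning rate
`μ < min{ν/((2α+7)δ²), 1/(mν)}` and snapshot period `m > 16αδ²/ν²`, the
α-SVRG iterates (snapshot refreshed every `m` steps, i.i.d. uniform indices,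
expectation written as an average over all index tuples) satisfy at `i = k·m`:
`E‖w° - w_{km}‖² ≤ ((1-μν)^m + 8μδ²α/ν)^k ‖w° - w₀‖² + 3μσ²(1-α)/(ν - 8μδ²α)`. -/
theorem alpha_svrg_convergence
    {E : Type*} [NormedAddCommGroup E] [InnerProductSpace ℝ E] [CompleteSpace E]
    {N m : ℕ} (hN : 0 < N) (hm : 0 < m)
    (Q : Fin N → E → ℝ) (gradQ : Fin N → E → E) (J : E → ℝ) (gradJ : E → E)
    (δn : Fin N → ℝ) (δ ν σ μ α : ℝ) (wo w0 : E)
    (w : ℕ → (ℕ → Fin N) → E)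
    (hQ : ∀ n x, HasGradientAt (Q n) (gradQ n x) x)
    (hJ : ∀ x, J x = (N : ℝ)⁻¹ * ∑ n, Q n x)
    (hgradJ : ∀ x, gradJ x = (N : ℝ)⁻¹ • ∑ n, gradQ n x)
    (hLipn : ∀ n x y, ‖gradQ n x - gradQ n y‖ ≤ δn n * ‖x - y‖)
    (hδ : δ ^ 2 = (N : ℝ)⁻¹ * ∑ n, δn n ^ 2)
    (hσ : σ ^ 2 = (N : ℝ)⁻¹ * ∑ n, ‖gradQ n wo‖ ^ 2)
    (hsc : StrongConvexOn Set.univ ν J)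
    (hmin : IsMinOn J Set.univ wo)
    (hν : 0 < ν) (hδpos : 0 < δ) (hα0 : 0 ≤ α) (hα1 : α ≤ 1) (hμ0 : 0 < μ)
    (hμ : μ < min (ν / ((2 * α + 7) * δ ^ 2)) (1 / (m * ν)))
    (hm16 : (m : ℝ) > 16 * α * δ ^ 2 / ν ^ 2)
    (hw0 : ∀ ω, w 0 ω = w0)
    (hupd : ∀ i ω, w (i + 1) ω =
      w i ω - μ • (gradQ (ω i) (w i ω) - α • gradQ (ω i) (w (m * (i / m)) ω)
        + α • gradJ (w (m * (i / m)) ω)))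
    (k : ℕ) :
    ((N : ℝ) ^ (k * m))⁻¹ *
        ∑ ωf : Fin (k * m) → Fin N,
          ‖wo - w (k * m) (fun j => if h : j < k * m then ωf ⟨j, h⟩ else ⟨0, hN⟩)‖ ^ 2 ≤
      ((1 - μ * ν) ^ m + 8 * μ * δ ^ 2 * α / ν) ^ k * ‖wo - w0‖ ^ 2
        + 3 * μ * σ ^ 2 * (1 - α) / (ν - 8 * μ * δ ^ 2 * α) :=
  alpha_svrg_convergence_general hN Q gradQ J gradJ δn δ ν σ μ α wo w0 w hQ hJ hgradJ hLipn hδ hσ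
    hsc hmin hν hα0 hα1 hμ0 hμ hw0 hupd k
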